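/- For every integer n ≥ 1, (2n)! / n! ≤ (e/√π) · (4/e)^n · n^n. -/

import Mathlib

/-! The Stirling sequence `m! / (√(2m) (m/e)^m)` decreases from `e/√2` at `m = 1` to its limit `√π`.
Its first value bounds `(2n)!` from above and its limit bounds `n!` from below, for every `n ≥ 1`;
dividing the two bounds gives the constant `e/√π`. -/

open Real Stirling Nat

theorem stirlingSeq_le_stirlingSeq_one {m : ℕ} (hm : m ≠ 0) : stirlingSeq m ≤ exp 1 / √2 := by
  obtain ⟨k, rfl⟩ := Nat.exists_eq_succ_of_ne_zero hm
  simpa [stirlingSeq_one] using stirlingSeq'_antitone (Nat.zero_le k)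

theorem factorial_le_exp_one_stirling {m : ℕ} (hm : m ≠ 0) :
    (m ! : ℝ) ≤ exp 1 * √m * (m / exp 1) ^ m := by
  have hpos : 0 < √(2 * m) * (m / exp 1) ^ m := by positivity
  have h := stirlingSeq_le_stirlingSeq_one hm
  rw [stirlingSeq, div_le_iff₀ hpos] at h
  calc (m ! : ℝ) ≤ exp 1 / √2 * (√(2 * m) * (m / exp 1) ^ m) := h
    _ = exp 1 * √m * (m / exp 1) ^ m := by
      rw [sqrt_mul zero_le_two]
      field_simp

/-- `(2n)!/n! ≤ (e/√π)·(4/e)^n·n^n` for `n ≥ 1`. -/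
theorem stmt_4 (n : ℕ) (hn : 1 ≤ n) :
    ((2 * n).factorial : ℝ) / (n.factorial : ℝ)
      ≤ Real.exp 1 / Real.sqrt Real.pi * (4 / Real.exp 1) ^ n * (n : ℝ) ^ n := by
  calc ((2 * n)! : ℝ) / n !
      ≤ (exp 1 * √(2 * n : ℕ) * ((2 * n : ℕ) / exp 1) ^ (2 * n))
          / (√(2 * π * n) * (n / exp 1) ^ n) :=
        div_le_div₀ (by positivity) (factorial_le_exp_one_stirling (by omega))
          (by positivity) (le_factorial_stirling n)
    _ = exp 1 / √π * (4 / exp 1) ^ n * n ^ n := by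
      push_cast
      rw [sqrt_mul' _ (Nat.cast_nonneg n), sqrt_mul' _ (Nat.cast_nonneg n), sqrt_mul zero_le_two]
      field_simp
      rw [pow_mul, ← mul_pow, ← mul_pow]
      ring
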